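/- Let E be a vector lattice with the principal projection property, F a Dedekind complete vector lattice, Φ : 𝔅(E) → 𝔅(F) a Boolean homomorphism, D ⊆ E a lateral ideal, and T : D → F a positive map, orthogonally additive on D, and atomic on D (T(π x) = Φ(π)(T x) for every π ∈ 𝔅(E) and x ∈ D; note π x ∈ D since π x ⊑ x). Assume that for every x ∈ E the set {T y : y ∈ 𝓕_x ∩ D} is bounded above in F, and define the minimal extension T̃ : E → F by T̃ x = sup {T y : y ∈ 𝓕_x ∩ D} (with sup ∅ = 0). Then T̃ is atomic subordinate to Φ: T̃(π x) = Φ(π)(T̃ x) for every order projection π ∈ 𝔅(E) and every x ∈ E. -/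

import Mathlib

/-!
An order projection `ρ` preserves suprema, since `s = ρ s + (s - ρ s)` with both summands
monotone in `s`. Hence `Φ(π)(T̃ x)` is the supremum of `Φ(π)` applied to `{0} ∪ {T y : y ∈ 𝓕_x ∩ D}`.
By atomicity `Φ(π)(T y) = T(π y)`, and `y ↦ π y` maps `𝓕_x ∩ D` onto `𝓕_{πx} ∩ D`: a fragment `z`
of `π x` satisfies `π z = z` and is a fragment of `x`. So this is the set whose supremum is `T̃(π x)`.
-/

namespace VL

/-- Two elements of a vector lattice are disjoint if `|x| ⊓ |y| = 0`. -/
def VDisjoint {G : Type*} [Lattice G] [AddCommGroup G] (x y : G) : Prop :=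
  |x| ⊓ |y| = 0

/-- `y` is a fragment of `x` if `y ⊥ (x - y)`. -/
def Fragment {G : Type*} [Lattice G] [AddCommGroup G] (y x : G) : Prop :=
  VDisjoint y (x - y)

/-- An order projection: a linear idempotent `π` with `0 ≤ π x ≤ x` for all `x ≥ 0`. -/
def IsOrderProjection {G : Type*} [Lattice G] [AddCommGroup G] [Module ℝ G]
    (π : G →ₗ[ℝ] G) : Prop :=
  (∀ x, π (π x) = π x) ∧ ∀ x : G, 0 ≤ x → 0 ≤ π x ∧ π x ≤ x

/-- A map between the order projections of `E` and of `F` is a Boolean homomorphism if it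
maps order projections to order projections and preserves the Boolean operations
`π ∧ ρ = π ∘ ρ`, `π ∨ ρ = π + ρ - π ∘ ρ` and `compl π = Id - π`. -/
def IsBooleanHom {E F : Type*} [Lattice E] [AddCommGroup E] [Module ℝ E]
    [Lattice F] [AddCommGroup F] [Module ℝ F]
    (Φ : (E →ₗ[ℝ] E) → (F →ₗ[ℝ] F)) : Prop :=
  (∀ π, IsOrderProjection π → IsOrderProjection (Φ π)) ∧
  (∀ π ρ, IsOrderProjection π → IsOrderProjection ρ →
    Φ (π ∘ₗ ρ) = Φ π ∘ₗ Φ ρ) ∧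
  (∀ π ρ, IsOrderProjection π → IsOrderProjection ρ →
    Φ (π + ρ - π ∘ₗ ρ) = Φ π + Φ ρ - Φ π ∘ₗ Φ ρ) ∧
  (∀ π, IsOrderProjection π → Φ (LinearMap.id - π) = LinearMap.id - Φ π)

/-- `T` is atomic subordinate to `Φ` if `T (π x) = Φ(π) (T x)` for every order projection. -/
def IsAtomic {E F : Type*} [Lattice E] [AddCommGroup E] [Module ℝ E]
    [Lattice F] [AddCommGroup F] [Module ℝ F]
    (Φ : (E →ₗ[ℝ] E) → (F →ₗ[ℝ] F)) (T : E → F) : Prop :=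
  ∀ π : E →ₗ[ℝ] E, IsOrderProjection π → ∀ x : E, T (π x) = Φ π (T x)

/-- The principal projection property: for every `x` there is an order projection `π_x`
(the projection onto the band generated by `x`) such that `z - π_x z ⊥ x` for all `z`,
and `π_x z ⊥ w` whenever `w ⊥ x`. -/
def HasPPP (E : Type*) [Lattice E] [AddCommGroup E] [Module ℝ E] : Prop :=
  ∀ x : E, ∃ π : E →ₗ[ℝ] E, IsOrderProjection π ∧
    (∀ z : E, VDisjoint (z - π z) x) ∧
    (∀ z w : E, VDisjoint w x → VDisjoint (π z) w)

/-- Dedekind completeness: every nonempty set bounded above has a supremum. -/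
def DedekindComplete (F : Type*) [Lattice F] : Prop :=
  ∀ S : Set F, S.Nonempty → BddAbove S → ∃ b, IsLUB S b


variable {E F : Type*}
  [Lattice E] [AddCommGroup E] [Module ℝ E]
  [CovariantClass E E (· + ·) (· ≤ ·)] [PosSMulMono ℝ E]
  [Lattice F] [AddCommGroup F] [Module ℝ F]
  [CovariantClass F F (· + ·) (· ≤ ·)] [PosSMulMono ℝ F]

/-- A lateral ideal: closed under fragments and under sums of disjoint elements. -/
def IsLateralIdeal {G : Type*} [Lattice G] [AddCommGroup G] (D : Set G) : Prop :=
  (∀ x ∈ D, ∀ y : G, Fragment y x → y ∈ D) ∧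
  ∀ x ∈ D, ∀ y ∈ D, VDisjoint x y → x + y ∈ D

section Disjointness

variable {G : Type*} [Lattice G] [AddCommGroup G] [AddLeftMono G]

lemma inf_add_eq_zero_of_inf_eq_zero {a b c : G} (ha : 0 ≤ a) (hb : 0 ≤ b) (hc : 0 ≤ c)
    (hab : a ⊓ b = 0) (hac : a ⊓ c = 0) : a ⊓ (b + c) = 0 := by
  set d := a ⊓ (b + c)
  have hda : d ≤ a := inf_le_left
  have key : d - a ⊓ b ≤ a ⊓ c := by
    rw [sub_inf]
    refine sup_le (le_inf ?_ ?_) (le_inf ?_ ?_)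
    · exact (sub_nonpos.2 hda).trans ha
    · exact (sub_nonpos.2 hda).trans hc
    · exact (sub_le_self d hb).trans hda
    · exact sub_le_iff_le_add'.2 inf_le_right
  rw [hab, sub_zero, hac] at key
  exact le_antisymm key (le_inf ha (add_nonneg hb hc))

lemma VDisjoint.mono {u v u' v' : G} (h : VDisjoint u v) (hu : |u'| ≤ |u|) (hv : |v'| ≤ |v|) :
    VDisjoint u' v' :=
  le_antisymm ((inf_le_inf hu hv).trans_eq h) (le_inf (abs_nonneg _) (abs_nonneg _))

lemma VDisjoint.add_right {z u v : G} (hu : VDisjoint z u) (hv : VDisjoint z v) :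
    VDisjoint z (u + v) :=
  le_antisymm
    ((inf_le_inf_left _ (abs_add_le u v)).trans_eq
      (inf_add_eq_zero_of_inf_eq_zero (abs_nonneg _) (abs_nonneg _) (abs_nonneg _) hu hv))
    (le_inf (abs_nonneg _) (abs_nonneg _))

end Disjointness

namespace IsOrderProjection

variable {G : Type*} [Lattice G] [AddCommGroup G] [AddLeftMono G] [Module ℝ G]
  {π : G →ₗ[ℝ] G}

lemma mono (hπ : IsOrderProjection π) : Monotone π := fun x y h => by
  simpa [sub_nonneg] using (hπ.2 (y - x) (sub_nonneg.2 h)).1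

lemma compl (hπ : IsOrderProjection π) : IsOrderProjection (LinearMap.id - π) := by
  refine ⟨fun x => ?_, fun x hx => ⟨?_, ?_⟩⟩
  · simp only [LinearMap.sub_apply, LinearMap.id_apply, map_sub, hπ.1]
    abel
  · simpa [sub_nonneg] using (hπ.2 x hx).2
  · simpa using (hπ.2 x hx).1

lemma monotone_sub_map (hπ : IsOrderProjection π) : Monotone fun u => u - π u :=
  fun _ _ h => by simpa using hπ.compl.mono h

lemma abs_map_le (hπ : IsOrderProjection π) (u : G) : |π u| ≤ π |u| := by
  rw [abs_le', ← map_neg]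
  exact ⟨hπ.mono (le_abs_self u), hπ.mono (neg_le_abs u)⟩

lemma abs_map_le_abs (hπ : IsOrderProjection π) (u : G) : |π u| ≤ |u| :=
  (hπ.abs_map_le u).trans (hπ.2 |u| (abs_nonneg u)).2

lemma abs_sub_map_le_abs (hπ : IsOrderProjection π) (u : G) : |u - π u| ≤ |u| := by
  simpa using hπ.compl.abs_map_le_abs u

lemma vDisjoint_map_sub_map (hπ : IsOrderProjection π) (z w : G) :
    VDisjoint (π z) (w - π w) := by
  set c := |π z| ⊓ |w - π w|
  have hc : 0 ≤ c := le_inf (abs_nonneg _) (abs_nonneg _)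
  -- `c = π c + (c - π c)` and both summands vanish.
  have hw : c ≤ |w| - π |w| := inf_le_right.trans (by simpa using hπ.compl.abs_map_le w)
  have hz : c ≤ π |z| := inf_le_left.trans (hπ.abs_map_le z)
  have hπc : π c ≤ 0 := by simpa [hπ.1] using hπ.mono hw
  have hσc : c - π c ≤ 0 := by simpa [hπ.1] using hπ.monotone_sub_map hz
  exact le_antisymm (by simpa using add_nonpos hπc hσc) hc

lemma fragment_map_self (hπ : IsOrderProjection π) (y : G) : Fragment (π y) y :=
  hπ.vDisjoint_map_sub_map y y

lemma fragment_map (hπ : IsOrderProjection π) {y x : G} (h : Fragment y x) :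
    Fragment (π y) (π x) := by
  simpa [Fragment, map_sub] using h.mono (hπ.abs_map_le_abs y) (hπ.abs_map_le_abs (x - y))

lemma map_eq_self_of_fragment (hπ : IsOrderProjection π) {z x : G} (h : Fragment z (π x)) :
    π z = z := by
  have hz : z - π z = -((π x - z) - π (π x - z)) := by
    simp only [map_sub, hπ.1]
    abel
  have hdisj : VDisjoint (z - π z) (z - π z) :=
    h.mono (hπ.abs_sub_map_le_abs z) (by rw [hz, abs_neg]; exact hπ.abs_sub_map_le_abs _)
  rw [VDisjoint, inf_idem] at hdisj
  have h0 : z - π z = 0 :=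
    le_antisymm ((le_abs_self _).trans hdisj.le) (neg_nonpos.1 ((neg_le_abs _).trans hdisj.le))
  exact (sub_eq_zero.1 h0).symm

lemma fragment_of_fragment_map (hπ : IsOrderProjection π) {z x : G} (h : Fragment z (π x)) :
    Fragment z x := by
  have hzx : VDisjoint z (x - π x) := by
    simpa [hπ.map_eq_self_of_fragment h] using hπ.vDisjoint_map_sub_map z x
  simpa [Fragment] using hzx.add_right h

lemma isLUB_image (hπ : IsOrderProjection π) {S : Set G} {a : G} (h : IsLUB S a) :
    IsLUB (π '' S) (π a) := by
  refine ⟨hπ.mono.mem_upperBounds_image h.1, fun c hc => ?_⟩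
  have hle : a ≤ c + (a - π a) := h.2 fun s hs =>
    calc s = π s + (s - π s) := by abel
      _ ≤ c + (a - π a) := add_le_add (hc ⟨s, hs, rfl⟩) (hπ.monotone_sub_map (h.1 hs))
  simpa using sub_le_sub_right hle (a - π a)

end IsOrderProjection

section Extension

variable {G H : Type*} [Lattice G] [AddCommGroup G] [AddLeftMono G] [Module ℝ G]
  [AddCommGroup H] [Module ℝ H]

def fragmentValues (T : G → H) (D : Set G) (x : G) : Set H :=
  insert 0 {w | ∃ y : G, Fragment y x ∧ y ∈ D ∧ w = T y}

lemma fragmentValues_map {D : Set G} (hD : IsLateralIdeal D) {T : G → H}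
    {π : G →ₗ[ℝ] G} (hπ : IsOrderProjection π) {ρ : H →ₗ[ℝ] H}
    (hT : ∀ y ∈ D, T (π y) = ρ (T y)) (x : G) :
    fragmentValues T D (π x) = ρ '' fragmentValues T D x := by
  ext w
  constructor
  · rintro (rfl | ⟨z, hz, hzD, rfl⟩)
    · exact ⟨0, Set.mem_insert _ _, map_zero ρ⟩
    · refine ⟨T z, Or.inr ⟨z, hπ.fragment_of_fragment_map hz, hzD, rfl⟩, ?_⟩
      rw [← hT z hzD, hπ.map_eq_self_of_fragment hz]
  · rintro ⟨s, hs | ⟨y, hy, hyD, rfl⟩, rfl⟩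
    · rw [hs, map_zero]
      exact Set.mem_insert _ _
    · exact Or.inr ⟨π y, hπ.fragment_map hy, hD.1 y hyD _ (hπ.fragment_map_self y),
        (hT y hyD).symm⟩

end Extension

theorem minimal_extension_atomic_general
    (Φ : (E →ₗ[ℝ] E) → (F →ₗ[ℝ] F)) (hΦ : IsBooleanHom Φ)
    (D : Set E) (hD : IsLateralIdeal D) (T : E → F)
    (hTatomic : ∀ π : E →ₗ[ℝ] E, IsOrderProjection π → ∀ x ∈ D, T (π x) = Φ π (T x))
    (Text : E → F)
    (hText : ∀ x : E,
      IsLUB (insert (0 : F) {w : F | ∃ y : E, Fragment y x ∧ y ∈ D ∧ w = T y}) (Text x)) :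
    ∀ π : E →ₗ[ℝ] E, IsOrderProjection π → ∀ x : E, Text (π x) = Φ π (Text x) := by
  intro π hπ x
  have hsup : IsLUB (Φ π '' fragmentValues T D x) (Φ π (Text x)) :=
    (hΦ.1 π hπ).isLUB_image (hText x)
  rw [← fragmentValues_map hD hπ (hTatomic π hπ)] at hsup
  exact (hText (π x)).unique hsup

/-- the minimal extension `T̃ x = sup {T y : y ∈ 𝓕ₓ ∩ D}` (with
`sup ∅ = 0`) of a positive, orthogonally additive, atomic map on a lateral ideal `D` is
atomic subordinate to `Φ`. -/
theorem minimal_extension_atomic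
    (hE : HasPPP E) (hF : DedekindComplete F)
    (Φ : (E →ₗ[ℝ] E) → (F →ₗ[ℝ] F)) (hΦ : IsBooleanHom Φ)
    (D : Set E) (hD : IsLateralIdeal D) (T : E → F)
    (hTpos : ∀ x ∈ D, 0 ≤ T x)
    (hToa : ∀ x ∈ D, ∀ y ∈ D, VDisjoint x y → T (x + y) = T x + T y)
    (hTatomic : ∀ π : E →ₗ[ℝ] E, IsOrderProjection π → ∀ x ∈ D, T (π x) = Φ π (T x))
    (Text : E → F)
    (hText : ∀ x : E,
      IsLUB (insert (0 : F) {w : F | ∃ y : E, Fragment y x ∧ y ∈ D ∧ w = T y}) (Text x)) :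
    ∀ π : E →ₗ[ℝ] E, IsOrderProjection π → ∀ x : E, Text (π x) = Φ π (Text x) :=
  minimal_extension_atomic_general Φ hΦ D hD T hTatomic Text hText

end VL
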